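/- In the setting of the contact-family construction on V_1 ∪ ... ∪ V_k with |V_i| = n: if t ≤ 1/(4(d+1)^{k-1}), δ_k ≤ (1/4)(t/k)^{k-1}, and |Δ_{{1,...,k}}^{(t)}| ≥ (1-δ_k)n^k, then there exists a t-perfect vertex set X with |X ∩ V_i| = d for all i, provided ((k/t)^{k-1} δ_k + t(d+1)^{k-1}) n ≤ n - d. -/

import Mathlib

/-!
Membership of `f` in `Δ I` depends only on the restriction of `f` to `I`. Every `f ∉ Δ I` has
a coordinate `j ∉ I` at which fewer than `(1 - t) n` of its extensions lie in `Δ (I ∪ {j})`;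
double counting the pairs `(f, v)` with `f[j ↦ v] ∉ Δ (I ∪ {j})` bounds the number of such `f`
by `|Δ (I ∪ {j})ᶜ| / t`, so summing over at most `k` coordinates and inducting downwards on `I`
gives `|(Δ I)ᶜ| ≤ (k/t)^{|Iᶜ|} δ_k n^k`.

A t-perfect `X` is then built greedily, one vertex at a time. A vertex `v ∈ V_j` can be added
to `X_j` unless some partial transversal of `X` avoiding `V_j` fails to extend by `v`. The
empty transversal rules out at most `(k/t)^{k-1} δ_k n` vertices (the bound above for
`I = {j}`), and each of the at most `(d+1)^{k-1}` nonempty ones, which lies in `Δ` because `X`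
is perfect, rules out at most `t n`. The hypothesis on `n` leaves a vertex outside these and
outside `X_j`.
-/

open Finset Function

theorem sum_card_filter_update_mem {ι α : Type*} [Fintype ι] [DecidableEq ι] [Fintype α]
    [DecidableEq α] (S : Finset (ι → α)) (j : ι) :
    ∑ f : ι → α, #{v | update f j v ∈ S} = #S * Fintype.card α := by
  have hinv : Involutive fun p : (ι → α) × α => (update p.1 j p.2, p.1 j) := by
    intro p; simp
  calc ∑ f : ι → α, #{v | update f j v ∈ S}
      = #{p : (ι → α) × α | update p.1 j p.2 ∈ S} := by
        simp only [card_filter, ← univ_product_univ, sum_product]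
    _ = #(S ×ˢ univ) :=
        card_equiv (hinv.toPerm _) (by simp [Involutive.coe_toPerm])
    _ = #S * Fintype.card α := by rw [card_product, card_univ]

theorem card_mul_le_of_le_card_filter_update_mem {ι α : Type*} [Fintype ι] [DecidableEq ι]
    [Fintype α] [DecidableEq α] (S B : Finset (ι → α)) (j : ι) {c : ℝ}
    (hc : ∀ f ∈ B, c ≤ #{v | update f j v ∈ S}) :
    #B * c ≤ #S * Fintype.card α := by
  calc #B * c = ∑ f ∈ B, c := by rw [sum_const, nsmul_eq_mul]
    _ ≤ ∑ f ∈ B, (#{v | update f j v ∈ S} : ℝ) := sum_le_sum hc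
    _ ≤ ∑ f, (#{v | update f j v ∈ S} : ℝ) :=
        sum_le_univ_sum_of_nonneg fun _ => by positivity
    _ = #S * Fintype.card α := by exact_mod_cast sum_card_filter_update_mem S j

theorem card_compl_insert_lt {ι : Type*} [Fintype ι] [DecidableEq ι] {I : Finset ι} {j : ι}
    (hj : j ∉ I) : #(insert j I)ᶜ < #Iᶜ := by
  rw [compl_insert]; exact card_erase_lt_of_mem (mem_compl.2 hj)

theorem card_compl_insert {ι : Type*} [Fintype ι] [DecidableEq ι] {I : Finset ι} {j : ι}
    (hj : j ∉ I) : #(insert j I)ᶜ = #Iᶜ - 1 := by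
  rw [compl_insert, card_erase_of_mem (mem_compl.2 hj)]

theorem cast_card_filter_not {α : Type*} [Fintype α] (p : α → Prop) [DecidablePred p] :
    (#{v | ¬ p v} : ℝ) = Fintype.card α - #{v | p v} := by
  rw [← card_univ, ← card_filter_add_card_filter_not (s := univ) p]
  push_cast; ring

theorem card_piFinset_piecewise_singleton {ι α : Type*} [Fintype ι] [DecidableEq ι]
    [DecidableEq α] (I : Finset ι) (X : ι → Finset α) (z : ι → α) :
    #(Fintype.piFinset (I.piecewise X fun i => {z i})) = ∏ i ∈ I, #(X i) := by
  rw [Fintype.card_piFinset]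
  calc ∏ i, #(I.piecewise X (fun i => {z i}) i)
      = ∏ i, I.piecewise (fun i => #(X i)) (fun _ => 1) i :=
        prod_congr rfl fun i _ => by by_cases hi : i ∈ I <;> simp [hi]
    _ = ∏ i ∈ I, #(X i) := by simp [prod_piecewise]

theorem sum_powerset_prod_card_le {ι α : Type*} (s : Finset ι) (X : ι → Finset α) {d : ℕ}
    (hX : ∀ i ∈ s, #(X i) ≤ d) :
    ∑ I ∈ s.powerset, ∏ i ∈ I, #(X i) ≤ (d + 1) ^ #s := by
  rw [← prod_add_one]
  exact prod_le_pow_card s _ _ fun i hi => Nat.add_le_add_right (hX i hi) 1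

theorem exists_card_eq_of_forall_exists_insert {ι α : Type*} [Fintype ι] [DecidableEq ι]
    [DecidableEq α] {P : (ι → Finset α) → Prop} {d : ℕ}
    (step : ∀ X, P X → (∀ i, #(X i) ≤ d) → ∀ j, #(X j) < d →
      ∃ v ∉ X j, P (update X j (insert v (X j))))
    (X : ι → Finset α) (hX : P X) (hXd : ∀ i, #(X i) ≤ d) :
    ∃ Y, P Y ∧ ∀ i, #(Y i) = d := by
  by_cases hall : ∀ i, #(X i) = d
  · exact ⟨X, hX, hall⟩
  obtain ⟨j, hj⟩ := not_forall.mp hall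
  have hjd : #(X j) < d := (hXd j).lt_of_ne hj
  obtain ⟨v, hv, hPv⟩ := step X hX hXd j hjd
  have hcard : ∀ i, #(update X j (insert v (X j)) i) = #(X i) + if i = j then 1 else 0 := by
    intro i
    rcases eq_or_ne i j with rfl | hij
    · simp [card_insert_of_notMem hv]
    · simp [hij]
  exact exists_card_eq_of_forall_exists_insert step _ hPv fun i => by
    rw [hcard]; split_ifs with hij
    · subst hij; omega
    · simpa using hXd i
termination_by ∑ i, (d - #(X i))
decreasing_by
  refine sum_lt_sum (fun i _ => ?_) ⟨j, mem_univ j, ?_⟩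
  · rw [hcard]; omega
  · rw [hcard, if_pos rfl]; omega

variable {k n : ℕ}

/-- `Δ I` stands for `Δ_I^{(t)}`; a transversal of `(V_i)_{i ∈ I}` is represented by any
`f : Fin k → Fin n` that agrees with it on `I` (see `IsContactFamily.mem_congr`). -/
def IsContactFamily (t : ℝ) (Δ : Finset (Fin k) → Finset (Fin k → Fin n)) : Prop :=
  ∀ I : Finset (Fin k), I ≠ univ → ∀ f : Fin k → Fin n,
    (f ∈ Δ I ↔ ∀ j ∉ I, (1 - t) * n ≤ (#{v | update f j v ∈ Δ (insert j I)} : ℝ))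

def IsPerfect (Δ : Finset (Fin k) → Finset (Fin k → Fin n)) (X : Fin k → Finset (Fin n)) :
    Prop :=
  ∀ I : Finset (Fin k), I ≠ ∅ → ∀ f : Fin k → Fin n,
    (∀ i ∈ I, f i ∈ X i) → f ∈ Δ I

open Classical in
noncomputable def badVertices (Δ : Finset (Fin k) → Finset (Fin k → Fin n))
    (X : Fin k → Finset (Fin n)) (j : Fin k) : Finset (Fin n) :=
  {v | ∃ I, j ∉ I ∧ ∃ f : Fin k → Fin n,
    (∀ i ∈ I, f i ∈ X i) ∧ update f j v ∉ Δ (insert j I)}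

theorem isPerfect_const_empty (Δ : Finset (Fin k) → Finset (Fin k → Fin n)) :
    IsPerfect Δ fun _ => ∅ := fun _ hI _ hf =>
  absurd (hf _ (nonempty_iff_ne_empty.mpr hI).choose_spec) (notMem_empty _)

theorem IsPerfect.update_insert {Δ : Finset (Fin k) → Finset (Fin k → Fin n)}
    {X : Fin k → Finset (Fin n)} (hX : IsPerfect Δ X) {j : Fin k} {v : Fin n}
    (hv : v ∉ badVertices Δ X j) : IsPerfect Δ (update X j (insert v (X j))) := by
  simp only [badVertices, mem_filter, mem_univ, true_and, not_exists, not_and, not_not] at hv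
  intro I hI f hf
  by_cases hfj : j ∈ I ∧ f j = v
  · have hext := hv (I.erase j) (notMem_erase j I) f fun i hi => by
      simpa [update_of_ne (ne_of_mem_erase hi)] using hf i (mem_of_mem_erase hi)
    rwa [insert_erase hfj.1, ← hfj.2, update_eq_self] at hext
  refine hX I hI f fun i hi => ?_
  have hfi := hf i hi
  rcases eq_or_ne i j with rfl | hij
  · rw [update_self, mem_insert] at hfi
    exact hfi.resolve_left fun h => hfj ⟨hi, h⟩
  · rwa [update_of_ne hij] at hfi

namespace IsContactFamily

variable {t : ℝ} {Δ : Finset (Fin k) → Finset (Fin k → Fin n)}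

theorem mem_congr (hΔ : IsContactFamily t Δ) {I : Finset (Fin k)} {f g : Fin k → Fin n}
    (hfg : ∀ i ∈ I, f i = g i) : f ∈ Δ I ↔ g ∈ Δ I := by
  by_cases hI : I = univ
  · subst hI; rw [funext fun i => hfg i (mem_univ i)]
  rw [hΔ I hI f, hΔ I hI g]
  refine forall₂_congr fun j hj => ?_
  have hext (v : Fin n) :
      update f j v ∈ Δ (insert j I) ↔ update g j v ∈ Δ (insert j I) :=
    hΔ.mem_congr fun i hi => by
      rcases eq_or_ne i j with rfl | hij
      · simp
      · simp [hij, hfg i ((mem_insert.mp hi).resolve_left hij)]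
  simp only [hext]
termination_by #Iᶜ
decreasing_by exact card_compl_insert_lt hj

theorem card_filter_update_notMem_le (hΔ : IsContactFamily t Δ) {I : Finset (Fin k)}
    {j : Fin k} (hj : j ∉ I) {f : Fin k → Fin n} (hf : f ∈ Δ I) :
    (#{v | update f j v ∉ Δ (insert j I)} : ℝ) ≤ t * n := by
  have hI : I ≠ univ := fun h => hj (h ▸ mem_univ j)
  have := (hΔ I hI f).mp hf j hj
  rw [cast_card_filter_not, Fintype.card_fin]
  linarith

theorem card_compl_mul_le_sum (hΔ : IsContactFamily t Δ) (hn : 0 < n) (ht : 0 ≤ t)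
    {I : Finset (Fin k)} (hI : I ≠ univ) :
    (#(Δ I)ᶜ : ℝ) * t ≤ ∑ j ∈ Iᶜ, (#(Δ (insert j I))ᶜ : ℝ) := by
  set B : Fin k → Finset (Fin k → Fin n) :=
    fun j => {f | (#{v | update f j v ∈ Δ (insert j I)} : ℝ) < (1 - t) * n}
  have hcover : (Δ I)ᶜ ⊆ Iᶜ.biUnion B := by
    intro f hf
    obtain ⟨j, hj, hlt⟩ : ∃ j ∉ I, _ := by simpa [hΔ I hI f] using hf
    exact mem_biUnion.mpr ⟨j, mem_compl.mpr hj, mem_filter.mpr ⟨mem_univ f, hlt⟩⟩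
  have hB : ∀ j, (#(B j) : ℝ) * t ≤ #(Δ (insert j I))ᶜ := fun j => by
    have := card_mul_le_of_le_card_filter_update_mem (Δ (insert j I))ᶜ (B j) j
      (c := t * n) fun f hf => by
        have hlt := (mem_filter.mp hf).2
        simp only [mem_compl]
        rw [cast_card_filter_not, Fintype.card_fin]
        linarith
    rw [Fintype.card_fin] at this
    nlinarith [(Nat.cast_pos.mpr hn : (0 : ℝ) < n)]
  calc (#(Δ I)ᶜ : ℝ) * t ≤ (∑ j ∈ Iᶜ, (#(B j) : ℝ)) * t := by
        gcongr
        exact_mod_cast (card_le_card hcover).trans card_biUnion_le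
    _ ≤ ∑ j ∈ Iᶜ, (#(Δ (insert j I))ᶜ : ℝ) := by
        rw [sum_mul]; exact sum_le_sum fun j _ => hB j

theorem card_compl_le (hΔ : IsContactFamily t Δ) (hn : 0 < n) (ht : 0 < t) {δ : ℝ}
    (hbase : (#(Δ univ)ᶜ : ℝ) ≤ δ * n ^ k) (I : Finset (Fin k)) :
    (#(Δ I)ᶜ : ℝ) ≤ (k / t) ^ #Iᶜ * δ * n ^ k := by
  by_cases hI : I = univ
  · subst hI; simpa using hbase
  obtain ⟨j₀, hj₀⟩ : Iᶜ.Nonempty :=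
    nonempty_iff_ne_empty.mpr ((compl_eq_empty_iff I).not.mpr hI)
  set D := (k / t) ^ (#Iᶜ - 1) * δ * n ^ k
  have hstep : ∀ j ∈ Iᶜ, (#(Δ (insert j I))ᶜ : ℝ) ≤ D := fun j hj => by
    have := hΔ.card_compl_le hn ht hbase (insert j I)
    rwa [card_compl_insert (mem_compl.mp hj)] at this
  have hD : 0 ≤ D := (Nat.cast_nonneg _).trans (hstep j₀ hj₀)
  have hpow : (k / t : ℝ) ^ #Iᶜ = k / t * (k / t) ^ (#Iᶜ - 1) := by
    rw [← pow_succ', Nat.sub_add_cancel (card_pos.mpr ⟨j₀, hj₀⟩)]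
  calc (#(Δ I)ᶜ : ℝ) ≤ (∑ j ∈ Iᶜ, (#(Δ (insert j I))ᶜ : ℝ)) / t :=
        (le_div_iff₀ ht).mpr (hΔ.card_compl_mul_le_sum hn ht.le hI)
    _ ≤ #Iᶜ * D / t := by
        gcongr
        simpa using sum_le_card_nsmul _ _ _ hstep
    _ ≤ k * D / t := by
        gcongr
        exact_mod_cast card_le_univ _ |>.trans (Fintype.card_fin k).le
    _ = (k / t) ^ #Iᶜ * δ * n ^ k := by rw [hpow]; ring
termination_by #Iᶜ
decreasing_by exact card_compl_insert_lt (mem_compl.mp hj)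

theorem card_filter_update_notMem_singleton_le (hΔ : IsContactFamily t Δ) (hn : 0 < n)
    {δ₁ : ℝ} {j : Fin k} (hj : (#(Δ {j})ᶜ : ℝ) ≤ δ₁ * n ^ k) (f : Fin k → Fin n) :
    (#{v | update f j v ∉ Δ {j}} : ℝ) ≤ δ₁ * n := by
  -- by locality the count does not depend on `f`, so it equals its average over all `f`
  have hconst : ∀ g : Fin k → Fin n,
      #{v | update f j v ∉ Δ {j}} = #{v | update g j v ∈ (Δ {j})ᶜ} := fun g => by
    refine congrArg card <| filter_congr fun v _ => ?_
    rw [mem_compl, hΔ.mem_congr (g := update g j v) fun i hi => by simp [mem_singleton.mp hi]]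
  have havg := card_mul_le_of_le_card_filter_update_mem (Δ {j})ᶜ univ j
    fun g _ => (congrArg Nat.cast (hconst g)).le
  simp only [card_univ, Fintype.card_fun, Fintype.card_fin, Nat.cast_pow] at havg
  have hnk : (0 : ℝ) < n ^ k := by positivity
  nlinarith

theorem badVertices_subset (hΔ : IsContactFamily t Δ) (X : Fin k → Finset (Fin n))
    (j : Fin k) (z : Fin k → Fin n) :
    badVertices Δ X j ⊆ (univ.erase j).powerset.biUnion fun I =>
      (Fintype.piFinset (I.piecewise X fun i => {z i})).biUnion fun f =>
        {v | update f j v ∉ Δ (insert j I)} := by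
  intro v hv
  obtain ⟨I, hjI, f, hfX, hbad⟩ := (mem_filter.mp hv).2
  simp only [mem_biUnion, mem_powerset, mem_filter, mem_univ, true_and]
  refine ⟨I, fun i hi => mem_erase.mpr ⟨fun h => hjI (h ▸ hi), mem_univ i⟩, I.piecewise f z,
    Fintype.mem_piFinset.mpr fun i => ?_, ?_⟩
  · by_cases hi : i ∈ I <;> simp [hi, hfX]
  · rwa [hΔ.mem_congr (g := update f j v) fun i hi => ?_]
    rcases eq_or_ne i j with rfl | hij
    · simp
    · simp [hij, (mem_insert.mp hi).resolve_left hij]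

theorem card_badVertices_le (hΔ : IsContactFamily t Δ) (hn : 0 < n) (ht : 0 ≤ t)
    {X : Fin k → Finset (Fin n)} (hX : IsPerfect Δ X) {d : ℕ} (hXd : ∀ i, #(X i) ≤ d)
    {δ₁ : ℝ} {j : Fin k} (hj : (#(Δ {j})ᶜ : ℝ) ≤ δ₁ * n ^ k) :
    (#(badVertices Δ X j) : ℝ) ≤ (δ₁ + t * (d + 1) ^ (k - 1)) * n := by
  set z : Fin k → Fin n := fun _ => ⟨0, hn⟩
  set P := (univ.erase j).powerset
  set F := fun I : Finset (Fin k) => Fintype.piFinset (I.piecewise X fun i => {z i})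
  set bad := fun (I : Finset (Fin k)) (f : Fin k → Fin n) =>
    (filter (fun v => update f j v ∉ Δ (insert j I)) univ)
  have hempty : ∀ f ∈ F ∅, (#(bad ∅ f) : ℝ) ≤ δ₁ * n := fun f _ => by
    simpa [bad] using hΔ.card_filter_update_notMem_singleton_le hn hj f
  have hne : ∀ I ∈ P.erase ∅, ∀ f ∈ F I, (#(bad I f) : ℝ) ≤ t * n := by
    intro I hI f hf
    obtain ⟨hI0, hIj⟩ := mem_erase.mp hI
    have hjI : j ∉ I := fun h => by simpa using mem_powerset.mp hIj h
    refine hΔ.card_filter_update_notMem_le hjI (hX I hI0 f fun i hi => ?_)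
    simpa [piecewise_eq_of_mem _ _ _ hi] using Fintype.mem_piFinset.mp hf i
  have hF : ∀ I, #(F I) = ∏ i ∈ I, #(X i) := fun I => card_piFinset_piecewise_singleton I X z
  have hsumF : ∑ I ∈ P, #(F I) ≤ (d + 1) ^ (k - 1) := by
    simpa [hF, P] using sum_powerset_prod_card_le (univ.erase j) X fun i _ => hXd i
  calc (#(badVertices Δ X j) : ℝ) ≤ ∑ I ∈ P, ∑ f ∈ F I, (#(bad I f) : ℝ) := by
        norm_cast
        exact (card_le_card (hΔ.badVertices_subset X j z)).trans
          (card_biUnion_le.trans (sum_le_sum fun I _ => card_biUnion_le))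
    _ = ∑ f ∈ F ∅, (#(bad ∅ f) : ℝ)
          + ∑ I ∈ P.erase ∅, ∑ f ∈ F I, (#(bad I f) : ℝ) :=
        (add_sum_erase P _ (empty_mem_powerset _)).symm
    _ ≤ #(F ∅) * (δ₁ * n) + ∑ I ∈ P.erase ∅, #(F I) * (t * n) := by
        gcongr with I hI
        · simpa using sum_le_card_nsmul _ _ _ hempty
        · simpa using sum_le_card_nsmul _ _ _ (hne I hI)
    _ ≤ δ₁ * n + ∑ I ∈ P, #(F I) * (t * n) := by
        rw [hF, prod_empty, Nat.cast_one, one_mul]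
        gcongr
        exact erase_subset _ _
    _ ≤ (δ₁ + t * (d + 1) ^ (k - 1)) * n := by
        rw [← sum_mul, add_mul]
        have : (∑ I ∈ P, (#(F I) : ℝ)) ≤ (d + 1) ^ (k - 1) := by exact_mod_cast hsumF
        have htn : 0 ≤ t * n := by positivity
        nlinarith

theorem exists_isPerfect_update_insert (hΔ : IsContactFamily t Δ) (hn : 0 < n) (ht : 0 ≤ t)
    {X : Fin k → Finset (Fin n)} (hX : IsPerfect Δ X) {d : ℕ} (hXd : ∀ i, #(X i) ≤ d)
    {j : Fin k} (hjd : #(X j) < d) {δ₁ : ℝ} (hj : (#(Δ {j})ᶜ : ℝ) ≤ δ₁ * n ^ k)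
    (hside : (δ₁ + t * (d + 1) ^ (k - 1)) * n ≤ n - d) :
    ∃ v ∉ X j, IsPerfect Δ (update X j (insert v (X j))) := by
  have hlt : #(badVertices Δ X j ∪ X j) < #(univ : Finset (Fin n)) := by
    have hbad := hΔ.card_badVertices_le hn ht hX hXd hj
    have hjd' : (#(X j) : ℝ) + 1 ≤ d := by exact_mod_cast hjd
    have hunion : (#(badVertices Δ X j ∪ X j) : ℝ) ≤ #(badVertices Δ X j) + #(X j) := by
      exact_mod_cast card_union_le _ _
    rw [card_univ, Fintype.card_fin]
    exact_mod_cast (by linarith : (#(badVertices Δ X j ∪ X j) : ℝ) < n)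
  obtain ⟨v, -, hv⟩ := exists_mem_notMem_of_card_lt_card hlt
  rw [mem_union, not_or] at hv
  exact ⟨v, hv.2, hX.update_insert hv.1⟩

end IsContactFamily

theorem stmt_16_general {k n d : ℕ} (hn : 0 < n)
    (Δ : Finset (Fin k) → Finset (Fin k → Fin n))
    (t δk : ℝ) (ht0 : 0 < t)
    (hbase : ((1 : ℝ) - δk) * (n : ℝ) ^ k ≤ ((Δ Finset.univ).card : ℝ))
    (hrec : ∀ I : Finset (Fin k), I ≠ Finset.univ → ∀ f : Fin k → Fin n,
      (f ∈ Δ I ↔ ∀ j ∉ I, ((1 : ℝ) - t) * n ≤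
        ((Finset.univ.filter
          (fun v : Fin n => Function.update f j v ∈ Δ (insert j I))).card : ℝ)))
    (hside : (((k : ℝ) / t) ^ (k - 1) * δk + t * ((d : ℝ) + 1) ^ (k - 1)) * n
      ≤ (n : ℝ) - d) :
    ∃ X : Fin k → Finset (Fin n), (∀ i, (X i).card = d) ∧
      ∀ I : Finset (Fin k), I ≠ ∅ → ∀ f : Fin k → Fin n,
        (∀ i ∈ I, f i ∈ X i) → f ∈ Δ I := by
  have hΔ : IsContactFamily t Δ := hrec
  have hcompl : (#(Δ univ)ᶜ : ℝ) ≤ δk * n ^ k := by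
    rw [card_compl, Nat.cast_sub (card_le_univ _)]
    simp only [Fintype.card_fun, Fintype.card_fin, Nat.cast_pow]
    linarith
  have hsingle (j : Fin k) : (#(Δ {j})ᶜ : ℝ) ≤ (k / t) ^ (k - 1) * δk * n ^ k := by
    simpa [card_compl] using hΔ.card_compl_le hn ht0 hcompl {j}
  obtain ⟨X, hX, hXd⟩ := exists_card_eq_of_forall_exists_insert
    (fun X hX hXd j hjd =>
      hΔ.exists_isPerfect_update_insert hn ht0.le hX hXd hjd (hsingle j) hside)
    (fun _ => ∅) (isPerfect_const_empty Δ) fun _ => Nat.zero_le d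
  exact ⟨X, hXd, hX⟩

/-- existence of a t-perfect vertex set in the contact-family
construction. Partial transversals are encoded as total functions Fin k → Fin n (as in
the counting lemma). If t ≤ 1/(4(d+1)^{k-1}), δ_k ≤ (1/4)(t/k)^{k-1},
|Δ univ| ≥ (1-δ_k)n^k and ((k/t)^{k-1}δ_k + t(d+1)^{k-1})n ≤ n - d, then there is a
vertex set X with |X ∩ V_i| = d for all i such that every nonempty partial transversal
contained in X belongs to the contact family (i.e. to Δ I for its support I). -/
theorem stmt_16 {k n d : ℕ} (hk : 0 < k) (hn : 0 < n)
    (Δ : Finset (Fin k) → Finset (Fin k → Fin n))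
    (t δk : ℝ) (ht0 : 0 < t)
    (ht : t ≤ 1 / (4 * ((d : ℝ) + 1) ^ (k - 1)))
    (hδk : δk ≤ (1 / 4) * (t / k) ^ (k - 1))
    (hbase : ((1 : ℝ) - δk) * (n : ℝ) ^ k ≤ ((Δ Finset.univ).card : ℝ))
    (hrec : ∀ I : Finset (Fin k), I ≠ Finset.univ → ∀ f : Fin k → Fin n,
      (f ∈ Δ I ↔ ∀ j ∉ I, ((1 : ℝ) - t) * n ≤
        ((Finset.univ.filter
          (fun v : Fin n => Function.update f j v ∈ Δ (insert j I))).card : ℝ)))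
    (hside : (((k : ℝ) / t) ^ (k - 1) * δk + t * ((d : ℝ) + 1) ^ (k - 1)) * n
      ≤ (n : ℝ) - d) :
    ∃ X : Fin k → Finset (Fin n), (∀ i, (X i).card = d) ∧
      ∀ I : Finset (Fin k), I ≠ ∅ → ∀ f : Fin k → Fin n,
        (∀ i ∈ I, f i ∈ X i) → f ∈ Δ I :=
  stmt_16_general hn Δ t δk ht0 hbase hrec hside
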